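/- arXiv:1009.0810 — 4 statements merged into one kernel-verified Lean document; each statement's English description precedes it below -/
import Mathlib

section
/- Let M_1,…,M_s be perfect matchings of K_{2n} and let 1 ≤ x ≤ n. If s < (x!/2^x) · C(2n,x) · C(2n-x,x) / C(n,x)^2, then there exists a perfect matching M of K_{2n} such that for every i, M shares at most x-1 edges with M_i (i.e., |M ∩ M_i| ≤ x-1). -/
open Finset

/-- A matching: a set of pairwise disjoint edges (2-element vertex sets). -/
def IsMatching {V : Type} [DecidableEq V] (M : Finset (Finset V)) : Prop :=
  (∀ e ∈ M, e.card = 2) ∧ (M : Set (Finset V)).Pairwise Disjoint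

/-- A perfect matching of the complete graph on `V`: a matching covering every vertex. -/
def IsPerfectMatching {V : Type} [DecidableEq V] (M : Finset (Finset V)) : Prop :=
  IsMatching M ∧ ∀ v : V, ∃ e ∈ M, v ∈ e

/-!
The perfect matchings of the complete graph on `2m` vertices number `(2m-1)‼`: a fixed vertex
is matched to one of `2m-1` partners, and the rest is a perfect matching of the remaining `2m-2`
vertices. The perfect matchings containing a fixed set of `x` disjoint edges are those of the
`2n-2x` uncovered vertices. A perfect matching sharing at least `x` edges with `Mᵢ` contains one
of the `C(n,x)` sets of `x` edges of `Mᵢ`, so the union bound counts at most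
`s · C(n,x) · (2(n-x)-1)‼` bad matchings, and the hypothesis on `s` says exactly that this is
less than `(2n-1)‼`.
-/

open scoped Nat

variable {α : Type} [DecidableEq α] {V : Finset α} {M N S : Finset (Finset α)}

namespace IsMatching

lemma mono (hM : IsMatching M) (hS : S ⊆ M) : IsMatching S :=
  ⟨fun e he => hM.1 e (hS he), hM.2.mono hS⟩

lemma card_biUnion (hM : IsMatching M) : #(M.biUnion id) = 2 * #M := by
  rw [Finset.card_biUnion (t := id) hM.2, sum_const_nat (f := fun e => #(id e)) hM.1, mul_comm]

end IsMatching

open Classical in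
noncomputable def perfectMatchings (V : Finset α) : Finset (Finset (Finset α)) :=
  {M ∈ V.powerset.powerset | IsMatching M ∧ M.biUnion id = V}

lemma mem_perfectMatchings : M ∈ perfectMatchings V ↔ IsMatching M ∧ M.biUnion id = V := by
  classical
  rw [perfectMatchings, mem_filter, mem_powerset, and_iff_right_iff_imp]
  rintro ⟨-, rfl⟩ e he
  exact mem_powerset.2 (subset_biUnion_of_mem id he)

lemma isPerfectMatching_iff_mem_perfectMatchings [Fintype α] :
    IsPerfectMatching M ↔ M ∈ perfectMatchings univ := by
  simp [IsPerfectMatching, mem_perfectMatchings, eq_univ_iff_forall]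

lemma subset_of_mem_perfectMatchings (hM : M ∈ perfectMatchings V) {e : Finset α}
    (he : e ∈ M) : e ⊆ V :=
  (mem_perfectMatchings.1 hM).2 ▸ subset_biUnion_of_mem id he

lemma card_of_mem_perfectMatchings (hM : M ∈ perfectMatchings V) : #V = 2 * #M := by
  obtain ⟨hMm, rfl⟩ := mem_perfectMatchings.1 hM
  exact hMm.card_biUnion

lemma union_mem_perfectMatchings (hS : IsMatching S) (hSV : S.biUnion id ⊆ V)
    (hN : N ∈ perfectMatchings (V \ S.biUnion id)) : N ∪ S ∈ perfectMatchings V := by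
  obtain ⟨hNm, hNV⟩ := mem_perfectMatchings.1 hN
  have hdisj : ∀ e ∈ N, ∀ f ∈ S, Disjoint e f := fun e he f hf =>
    disjoint_of_subset_left (subset_of_mem_perfectMatchings hN he)
      (disjoint_of_subset_right (subset_biUnion_of_mem id hf) sdiff_disjoint)
  refine mem_perfectMatchings.2 ⟨⟨?_, ?_⟩, ?_⟩
  · intro e he
    rcases mem_union.1 he with he | he
    exacts [hNm.1 e he, hS.1 e he]
  · rw [coe_union, Set.pairwise_union]
    exact ⟨hNm.2, hS.2, fun e he f hf _ => ⟨hdisj e he f hf, (hdisj e he f hf).symm⟩⟩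
  · rw [union_biUnion, hNV, sdiff_union_of_subset hSV]

lemma sdiff_mem_perfectMatchings (hM : M ∈ perfectMatchings V) (hS : S ⊆ M) :
    M \ S ∈ perfectMatchings (V \ S.biUnion id) := by
  obtain ⟨hMm, hMV⟩ := mem_perfectMatchings.1 hM
  have hdisj : Disjoint ((M \ S).biUnion id) (S.biUnion id) := by
    rw [disjoint_biUnion_left]
    intro e he
    rw [disjoint_biUnion_right]
    intro f hf
    exact hMm.2 (mem_sdiff.1 he).1 (hS hf) fun h => (mem_sdiff.1 he).2 (h ▸ hf)
  refine mem_perfectMatchings.2 ⟨hMm.mono sdiff_subset, ?_⟩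
  rw [← hMV, ← union_sdiff_cancel_right hdisj, ← union_biUnion, sdiff_union_of_subset hS]

lemma card_filter_superset_perfectMatchings (hS : IsMatching S) (hSV : S.biUnion id ⊆ V) :
    #{M ∈ perfectMatchings V | S ⊆ M} = #(perfectMatchings (V \ S.biUnion id)) := by
  refine card_nbij' (· \ S) (· ∪ S) ?_ ?_ ?_ ?_
  · intro M hM
    obtain ⟨hM, hSM⟩ := mem_filter.1 hM
    exact sdiff_mem_perfectMatchings hM hSM
  · intro N hN
    exact mem_filter.2 ⟨union_mem_perfectMatchings hS hSV hN, subset_union_right⟩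
  · intro M hM
    exact sdiff_union_of_subset (mem_filter.1 hM).2
  · intro N hN
    refine union_sdiff_cancel_right (disjoint_left.2 fun e heN heS => ?_)
    obtain ⟨v, hv⟩ := card_pos.1 (hS.1 e heS ▸ two_pos)
    exact (mem_sdiff.1 (subset_of_mem_perfectMatchings hN heN hv)).2
      (subset_biUnion_of_mem id heS hv)

lemma perfectMatchings_empty : perfectMatchings (∅ : Finset α) = {∅} := by
  ext M
  rw [mem_perfectMatchings, mem_singleton]
  constructor
  · rintro ⟨hMm, hM⟩
    refine eq_empty_of_forall_notMem fun e he => ?_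
    have he2 := hMm.1 e he
    rw [subset_empty.1 (hM ▸ subset_biUnion_of_mem id he : e ⊆ ∅), card_empty] at he2
    exact absurd he2 (by decide)
  · rintro rfl
    exact ⟨⟨by simp, by simp⟩, rfl⟩

lemma exists_pair_mem_of_mem_perfectMatchings {v : α} (hM : M ∈ perfectMatchings V)
    (hv : v ∈ V) : ∃ w ∈ V.erase v, {v, w} ∈ M := by
  obtain ⟨hMm, hMV⟩ := mem_perfectMatchings.1 hM
  obtain ⟨e, he, hve : v ∈ e⟩ := mem_biUnion.1 (hMV ▸ hv)
  have hcard : #(e.erase v) = 1 := by rw [card_erase_of_mem hve, hMm.1 e he]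
  obtain ⟨w, hw⟩ := card_eq_one.1 hcard
  have hwe : w ∈ e.erase v := hw ▸ mem_singleton_self w
  refine ⟨w, mem_erase.2 ⟨ne_of_mem_erase hwe, subset_of_mem_perfectMatchings hM he
    (mem_of_mem_erase hwe)⟩, ?_⟩
  rwa [← hw, insert_erase hve]

lemma perfectMatchings_eq_biUnion {v : α} (hv : v ∈ V) :
    perfectMatchings V =
      (V.erase v).biUnion fun w => {M ∈ perfectMatchings V | {v, w} ∈ M} := by
  ext M
  simp only [mem_biUnion, mem_filter]
  constructor
  · intro hM
    obtain ⟨w, hw, hvw⟩ := exists_pair_mem_of_mem_perfectMatchings hM hv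
    exact ⟨w, hw, hM, hvw⟩
  · rintro ⟨w, -, hM, -⟩
    exact hM

lemma card_perfectMatchings_eq_sum {v : α} (hv : v ∈ V) :
    #(perfectMatchings V) = ∑ w ∈ V.erase v, #(perfectMatchings (V \ {v, w})) := by
  rw [perfectMatchings_eq_biUnion hv, card_biUnion]
  · refine sum_congr rfl fun w hw => ?_
    have hpair : IsMatching {({v, w} : Finset α)} :=
      ⟨by simpa using card_pair (ne_of_mem_erase hw).symm,
        by rw [coe_singleton]; exact Set.pairwise_singleton _ _⟩
    have hsub : ({v, w} : Finset α) ⊆ V :=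
      insert_subset hv (singleton_subset_iff.2 (mem_of_mem_erase hw))
    simp_rw [← singleton_subset_iff (a := ({v, w} : Finset α))]
    rw [card_filter_superset_perfectMatchings hpair (by simpa using hsub)]
    simp
  · intro w hw w' hw' hww'
    refine disjoint_left.2 fun M hM hM' => ?_
    obtain ⟨hM, hvw⟩ := mem_filter.1 hM
    obtain ⟨-, hvw'⟩ := mem_filter.1 hM'
    have hne : ({v, w} : Finset α) ≠ {v, w'} := fun h => by
      have hw'' : w ∈ ({v, w'} : Finset α) := h ▸ by simp
      rcases mem_insert.1 hw'' with h1 | h1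
      exacts [ne_of_mem_erase hw h1, hww' (mem_singleton.1 h1)]
    exact not_disjoint_iff.2 ⟨v, mem_insert_self v {w}, mem_insert_self v {w'}⟩
      ((mem_perfectMatchings.1 hM).1.2 hvw hvw' hne)

theorem card_perfectMatchings {m : ℕ} (hV : #V = 2 * m) :
    #(perfectMatchings V) = (2 * m - 1)‼ := by
  induction m generalizing V with
  | zero =>
    rw [card_eq_zero.1 hV, perfectMatchings_empty]
    rfl
  | succ m ih =>
    obtain ⟨v, hv⟩ := card_pos.1 (by omega : 0 < #V)
    have hterm : ∀ w ∈ V.erase v, #(perfectMatchings (V \ {v, w})) = (2 * m - 1)‼ := by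
      intro w hw
      refine ih ?_
      rw [card_sdiff_of_subset (insert_subset hv (singleton_subset_iff.2 (mem_of_mem_erase hw))),
        card_pair (ne_of_mem_erase hw).symm, hV]
      omega
    rw [card_perfectMatchings_eq_sum hv, sum_congr rfl hterm, sum_const, card_erase_of_mem hv, hV,
      smul_eq_mul, show 2 * (m + 1) - 1 = 2 * m + 1 by omega, Nat.doubleFactorial_add_one]

lemma card_filter_le_card_inter_le {P : Finset (Finset α)} (hP : P ∈ perfectMatchings V)
    (x : ℕ) :
    #{M ∈ perfectMatchings V | x ≤ #(M ∩ P)} ≤ (#P).choose x * (2 * (#P - x) - 1)‼ := by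
  obtain ⟨hPm, hPV⟩ := mem_perfectMatchings.1 hP
  calc #{M ∈ perfectMatchings V | x ≤ #(M ∩ P)}
      ≤ #((P.powersetCard x).biUnion fun S => {M ∈ perfectMatchings V | S ⊆ M}) := by
        refine card_le_card fun M hM => ?_
        obtain ⟨hMV, hx⟩ := mem_filter.1 hM
        obtain ⟨S, hS, rfl⟩ := exists_subset_card_eq hx
        exact mem_biUnion.2 ⟨S, mem_powersetCard.2 ⟨hS.trans inter_subset_right, rfl⟩,
          mem_filter.2 ⟨hMV, hS.trans inter_subset_left⟩⟩
    _ ≤ ∑ S ∈ P.powersetCard x, #{M ∈ perfectMatchings V | S ⊆ M} := card_biUnion_le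
    _ = ∑ S ∈ P.powersetCard x, (2 * (#P - x) - 1)‼ := by
        refine sum_congr rfl fun S hS => ?_
        obtain ⟨hSP, hSx⟩ := mem_powersetCard.1 hS
        have hSm := hPm.mono hSP
        have hSV : S.biUnion id ⊆ V := hPV ▸ biUnion_subset_biUnion_of_subset_left id hSP
        rw [card_filter_superset_perfectMatchings hSm hSV]
        apply card_perfectMatchings
        rw [card_sdiff_of_subset hSV, hSm.card_biUnion, card_of_mem_perfectMatchings hP, hSx]
        have := card_le_card hSP
        omega
    _ = (#P).choose x * (2 * (#P - x) - 1)‼ := by rw [sum_const, card_powersetCard, smul_eq_mul]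

lemma Nat.doubleFactorial_two_mul_sub_one_mul (m : ℕ) :
    (2 * m - 1)‼ * (2 ^ m * m !) = (2 * m)! := by
  cases m with
  | zero => rfl
  | succ m =>
    rw [show 2 * (m + 1) - 1 = 2 * m + 1 by omega, ← Nat.doubleFactorial_two_mul,
      show 2 * (m + 1) = 2 * m + 1 + 1 by ring, Nat.factorial_eq_mul_doubleFactorial, mul_comm]

lemma bound_mul_choose_mul_doubleFactorial {n x : ℕ} (hxn : x ≤ n) :
    (x ! : ℚ) / 2 ^ x * (2 * n).choose x * (2 * n - x).choose x / (n.choose x : ℚ) ^ 2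
      * (n.choose x * (2 * (n - x) - 1)‼) = (2 * n - 1)‼ := by
  have hn := Nat.doubleFactorial_two_mul_sub_one_mul n
  have hnx := Nat.doubleFactorial_two_mul_sub_one_mul (n - x)
  have hc := Nat.choose_mul_factorial_mul_factorial hxn
  have hc1 := Nat.choose_mul_factorial_mul_factorial (show x ≤ 2 * n by omega)
  have hc2 := Nat.choose_mul_factorial_mul_factorial (show x ≤ 2 * n - x by omega)
  rw [show 2 * n - x - x = 2 * (n - x) by omega] at hc2
  have hpow : (2 : ℚ) ^ n = 2 ^ x * 2 ^ (n - x) := by rw [← pow_add, Nat.add_sub_cancel' hxn]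
  have hchoose : (n.choose x : ℚ) ≠ 0 := by exact_mod_cast (Nat.choose_pos hxn).ne'
  qify at hn hnx hc hc1 hc2
  field_simp
  -- after multiplying by `2 ^ (n - x) * (n - x)! * x !`, both sides are `(2 * n)!`
  refine mul_right_cancel₀ (b := (2 : ℚ) ^ (n - x) * (n - x)! * x !) (by positivity) ?_
  linear_combination ((2 * n).choose x * (2 * n - x).choose x * (x ! : ℚ) ^ 2) * hnx
    + ((2 * n).choose x * x ! : ℚ) * hc2 + hc1 - hn - ((2 * n - 1)‼ * 2 ^ n : ℚ) * hc
    + ((2 * n - 1)‼ * n.choose x * x ! * (n - x)! : ℚ) * hpow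

theorem coveringRadiusBound_general (n x s : ℕ) (hxn : x ≤ n)
    (M : Fin s → Finset (Finset (Fin (2*n)))) (hM : ∀ i, IsPerfectMatching (M i))
    (hs : (s : ℚ) < ((x.factorial : ℚ) / 2^x) * ((2*n).choose x) * ((2*n - x).choose x)
            / ((n.choose x : ℚ))^2) :
    ∃ M₀ : Finset (Finset (Fin (2*n))), IsPerfectMatching M₀ ∧
      ∀ i, (M₀ ∩ M i).card ≤ x - 1 := by
  have hMi i : M i ∈ perfectMatchings univ := isPerfectMatching_iff_mem_perfectMatchings.1 (hM i)
  have hcard i : #(M i) = n := by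
    have := card_of_mem_perfectMatchings (hMi i)
    rw [card_univ, Fintype.card_fin] at this
    omega
  set bad := univ.biUnion fun i => {M₀ ∈ perfectMatchings univ | x ≤ #(M₀ ∩ M i)}
  have hbad : #bad ≤ s * (n.choose x * (2 * (n - x) - 1)‼) :=
    calc #bad
        ≤ ∑ i, #{M₀ ∈ perfectMatchings univ | x ≤ #(M₀ ∩ M i)} := card_biUnion_le
      _ ≤ ∑ _i : Fin s, n.choose x * (2 * (n - x) - 1)‼ :=
        sum_le_sum fun i _ => by
          simpa only [hcard] using card_filter_le_card_inter_le (hMi i) x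
      _ = s * (n.choose x * (2 * (n - x) - 1)‼) := by simp
  have hlt : s * (n.choose x * (2 * (n - x) - 1)‼) <
      #(perfectMatchings (univ : Finset (Fin (2 * n)))) := by
    have hpos : (0 : ℚ) < n.choose x * (2 * (n - x) - 1)‼ := by
      have := Nat.choose_pos hxn
      positivity
    have := mul_lt_mul_of_pos_right hs hpos
    rw [bound_mul_choose_mul_doubleFactorial hxn] at this
    rw [card_perfectMatchings (m := n) (by simp)]
    exact_mod_cast this
  obtain ⟨M₀, hM₀, hM₀bad⟩ := exists_mem_notMem_of_card_lt_card (hbad.trans_lt hlt)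
  refine ⟨M₀, isPerfectMatching_iff_mem_perfectMatchings.2 hM₀, fun i => ?_⟩
  have : ¬ x ≤ #(M₀ ∩ M i) := fun h =>
    hM₀bad (mem_biUnion.2 ⟨i, mem_univ i, mem_filter.2 ⟨hM₀, h⟩⟩)
  omega

theorem coveringRadiusBound (n x s : ℕ) (hx1 : 1 ≤ x) (hxn : x ≤ n)
    (M : Fin s → Finset (Finset (Fin (2*n)))) (hM : ∀ i, IsPerfectMatching (M i))
    (hs : (s : ℚ) < ((x.factorial : ℚ) / 2^x) * ((2*n).choose x) * ((2*n - x).choose x)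
            / ((n.choose x : ℚ))^2) :
    ∃ M₀ : Finset (Finset (Fin (2*n))), IsPerfectMatching M₀ ∧
      ∀ i, (M₀ ∩ M i).card ≤ x - 1 :=
  coveringRadiusBound_general n x s hxn M hM hs
end

section
/- Let M be a collection of perfect matchings of K_{2n} in which every edge of K_{2n} appears in at most k members of M. For a fixed member M_i and a fixed x-matching X ⊆ M_i, the number of pairs (M_{i'}, X') with M_{i'} ∈ M, X' an x-matching in M_{i'}, and X' sharing at least one vertex with X, is at most k · 2x · (2n-1) · C(n-1, x-1). -/
open Finset

private lemma edge_unique {V : Type} [DecidableEq V] {M : Finset (Finset V)}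
    (h : IsMatching M) {e1 e2 : Finset V} (h1 : e1 ∈ M) (h2 : e2 ∈ M) {v : V}
    (hv1 : v ∈ e1) (hv2 : v ∈ e2) : e1 = e2 := by
  by_contra hne
  exact (Finset.disjoint_left.1 (h.2 h1 h2 hne)) hv1 hv2

private lemma card_of_pm {n : ℕ} {M : Finset (Finset (Fin (2*n)))}
    (h : IsPerfectMatching M) : M.card = n := by
  have hb : M.biUnion id = Finset.univ := by
    apply Finset.eq_univ_of_forall
    intro v
    obtain ⟨e, he, hv⟩ := h.2 v
    exact Finset.mem_biUnion.2 ⟨e, he, hv⟩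
  have hcard : (M.biUnion id).card = ∑ e ∈ M, e.card :=
    Finset.card_biUnion (fun a ha b hb' hab => h.1.2 ha hb' hab)
  rw [hb, Finset.card_univ, Fintype.card_fin] at hcard
  rw [Finset.sum_congr rfl (fun e he => h.1.1 e he), Finset.sum_const,
    smul_eq_mul] at hcard
  omega

private lemma Sv_bound (n x s k : ℕ)
    (M : Fin s → Finset (Finset (Fin (2*n)))) (hM : ∀ i, IsPerfectMatching (M i))
    (hk : ∀ e : Finset (Fin (2*n)), e.card = 2 →
      (Finset.univ.filter (fun i => e ∈ M i)).card ≤ k)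
    (v : Fin (2*n)) :
    (Finset.univ.filter (fun p : Fin s × Finset (Finset (Fin (2*n))) =>
        p.2 ⊆ M p.1 ∧ p.2.card = x ∧ ∃ e ∈ p.2, v ∈ e)).card
      ≤ (n-1).choose (x-1) * (k * (2*n - 1)) := by
  classical
  set Sv := Finset.univ.filter (fun p : Fin s × Finset (Finset (Fin (2*n))) =>
      p.2 ⊆ M p.1 ∧ p.2.card = x ∧ ∃ e ∈ p.2, v ∈ e) with hSv
  -- map p to (its index, the set of edges of p.2 containing v)
  set g : Fin s × Finset (Finset (Fin (2*n))) → Fin s × Finset (Finset (Fin (2*n))) :=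
    fun p => (p.1, p.2.filter (fun e => v ∈ e)) with hg
  -- any member of Sv : its filter is a singleton {e0} with e0 ∈ M p.1, v ∈ e0
  have key : ∀ p ∈ Sv, ∃ e0, p.2.filter (fun e => v ∈ e) = {e0} ∧ e0 ∈ M p.1 ∧ v ∈ e0 := by
    intro p hp
    rw [hSv, Finset.mem_filter] at hp
    obtain ⟨-, hsub, hcx, e, he, hve⟩ := hp
    refine ⟨e, ?_, hsub he, hve⟩
    apply Finset.eq_singleton_iff_unique_mem.2
    refine ⟨Finset.mem_filter.2 ⟨he, hve⟩, ?_⟩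
    intro e' he'
    rw [Finset.mem_filter] at he'
    exact edge_unique (hM p.1).1 (hsub he'.1) (hsub he) he'.2 hve
  have h1 : Sv.card ≤ (n-1).choose (x-1) * (Sv.image g).card := by
    apply Finset.card_le_mul_card_image
    intro b hb
    obtain ⟨p0, hp0, hgp0⟩ := Finset.mem_image.1 hb
    obtain ⟨e0, hfe0, he0M, hve0⟩ := key p0 hp0
    -- fiber injects into powersetCard (x-1) ((M b.1).erase e0)
    have hb1' : b.1 = p0.1 := by rw [← hgp0]
    have hfib : ∀ p ∈ Sv.filter (fun a => g a = b),
        p.2.erase e0 ∈ Finset.powersetCard (x-1) ((M b.1).erase e0) := by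
      intro p hp
      rw [Finset.mem_filter] at hp
      obtain ⟨hpSv, hgb⟩ := hp
      rw [hSv, Finset.mem_filter] at hpSv
      obtain ⟨-, hsub, hcx, -⟩ := hpSv
      have hb1 : p.1 = b.1 := by rw [← hgb]
      have hF : p.2.filter (fun e => v ∈ e) = {e0} := by
        have : (g p).2 = b.2 := by rw [hgb]
        rw [hg] at this
        simp only at this
        rw [this, ← hgp0, hg]
        exact hfe0
      have he0p : e0 ∈ p.2 := by
        have : e0 ∈ p.2.filter (fun e => v ∈ e) := by rw [hF]; exact Finset.mem_singleton_self _
        exact (Finset.mem_filter.1 this).1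
      apply Finset.mem_powersetCard.2
      constructor
      · intro a ha
        rw [Finset.mem_erase] at ha ⊢
        exact ⟨ha.1, hb1 ▸ hsub ha.2⟩
      · rw [Finset.card_erase_of_mem he0p, hcx]
    have hinj : Set.InjOn (fun p : Fin s × Finset (Finset (Fin (2*n))) => p.2.erase e0)
        (Sv.filter (fun a => g a = b)) := by
      intro p hp q hq hpq
      rw [Finset.coe_filter, Set.mem_setOf_eq] at hp hq
      have hep : e0 ∈ p.2 := by
        obtain ⟨hpSv, hgb⟩ := hp
        have hF : p.2.filter (fun e => v ∈ e) = {e0} := by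
          have : (g p).2 = b.2 := by rw [hgb]
          rw [hg] at this; simp only at this
          rw [this, ← hgp0, hg]; exact hfe0
        have : e0 ∈ p.2.filter (fun e => v ∈ e) := by rw [hF]; exact Finset.mem_singleton_self _
        exact (Finset.mem_filter.1 this).1
      have heq : e0 ∈ q.2 := by
        obtain ⟨hqSv, hgb⟩ := hq
        have hF : q.2.filter (fun e => v ∈ e) = {e0} := by
          have : (g q).2 = b.2 := by rw [hgb]
          rw [hg] at this; simp only at this
          rw [this, ← hgp0, hg]; exact hfe0
        have : e0 ∈ q.2.filter (fun e => v ∈ e) := by rw [hF]; exact Finset.mem_singleton_self _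
        exact (Finset.mem_filter.1 this).1
      have h1 : p.1 = b.1 := by rw [← hp.2]
      have h2 : q.1 = b.1 := by rw [← hq.2]
      simp only at hpq
      have h2nd : p.2 = q.2 := by
        rw [← Finset.insert_erase hep, ← Finset.insert_erase heq, hpq]
      exact Prod.ext (h1.trans h2.symm) h2nd
    calc (Sv.filter (fun a => g a = b)).card
        ≤ (Finset.powersetCard (x-1) ((M b.1).erase e0)).card :=
          Finset.card_le_card_of_injOn _ hfib hinj
      _ = ((M b.1).erase e0).card.choose (x-1) := Finset.card_powersetCard _ _
      _ = (n-1).choose (x-1) := by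
          rw [hb1', Finset.card_erase_of_mem he0M, card_of_pm (hM p0.1)]
  -- now bound the image : |image g| ≤ k * (2n-1)
  have h2 : (Sv.image g).card ≤ k * (2*n - 1) := by
    set T := Sv.image g with hT
    set π : Fin s × Finset (Finset (Fin (2*n))) → Finset (Finset (Fin (2*n))) :=
      fun q => q.2 with hπ
    have keyT : ∀ b ∈ T, ∃ e0, b.2 = {e0} ∧ e0 ∈ M b.1 ∧ v ∈ e0 ∧ e0.card = 2 := by
      intro b hb
      obtain ⟨p0, hp0, hgp0⟩ := Finset.mem_image.1 hb
      obtain ⟨e0, hfe0, he0M, hve0⟩ := key p0 hp0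
      have hb1 : b.1 = p0.1 := by rw [← hgp0]
      refine ⟨e0, ?_, hb1 ▸ he0M, hve0, (hM p0.1).1.1 e0 he0M⟩
      rw [← hgp0]
      exact hfe0
    have hA : T.card ≤ k * (T.image π).card := by
      apply Finset.card_le_mul_card_image
      intro F hF
      obtain ⟨b0, hb0, hπb0⟩ := Finset.mem_image.1 hF
      obtain ⟨e0, hFe0, -, -, he0c⟩ := keyT b0 hb0
      have hFsing : F = {e0} := by rw [← hπb0, hπ]; exact hFe0
      -- fiber injects into indices j with e0 ∈ M j
      have hmap : ∀ q ∈ T.filter (fun a => π a = F),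
          q.1 ∈ Finset.univ.filter (fun j => e0 ∈ M j) := by
        intro q hq
        rw [Finset.mem_filter] at hq
        obtain ⟨hqT, hqF⟩ := hq
        obtain ⟨e1, hq2, he1M, -, -⟩ := keyT q hqT
        have : e1 = e0 := by
          have : ({e1} : Finset _) = {e0} := by rw [← hq2, ← hFsing, ← hqF]
          exact Finset.singleton_injective this
        rw [Finset.mem_filter]
        exact ⟨Finset.mem_univ _, this ▸ he1M⟩
      have hinj : Set.InjOn (fun q : Fin s × Finset (Finset (Fin (2*n))) => q.1)
          (T.filter (fun a => π a = F)) := by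
        intro p hp q hq hpq
        rw [Finset.coe_filter, Set.mem_setOf_eq] at hp hq
        exact Prod.ext hpq (hp.2.trans hq.2.symm)
      calc (T.filter (fun a => π a = F)).card
          ≤ (Finset.univ.filter (fun j => e0 ∈ M j)).card :=
            Finset.card_le_card_of_injOn _ hmap hinj
        _ ≤ k := hk e0 he0c
    have hB : (T.image π).card ≤ 2*n - 1 := by
      -- each element is {e0}, e0.card = 2, v ∈ e0; map to e0.erase v
      have hmap : ∀ F ∈ T.image π,
          F.biUnion (fun e => e.erase v) ∈ Finset.powersetCard 1 (Finset.univ.erase v) := by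
        intro F hF
        obtain ⟨b0, hb0, hπb0⟩ := Finset.mem_image.1 hF
        obtain ⟨e0, hFe0, -, hve0, he0c⟩ := keyT b0 hb0
        have hFsing : F = {e0} := by rw [← hπb0, hπ]; exact hFe0
        rw [hFsing, Finset.singleton_biUnion]
        apply Finset.mem_powersetCard.2
        constructor
        · intro a ha
          rw [Finset.mem_erase] at ha ⊢
          exact ⟨ha.1, Finset.mem_univ _⟩
        · rw [Finset.card_erase_of_mem hve0, he0c]
      have hinj : Set.InjOn (fun F : Finset (Finset (Fin (2*n))) =>
          F.biUnion (fun e => e.erase v)) (T.image π) := by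
        intro F1 hF1 F2 hF2 heq
        rw [Finset.mem_coe] at hF1 hF2
        obtain ⟨b1, hb1, hπb1⟩ := Finset.mem_image.1 hF1
        obtain ⟨e1, hFe1, -, hve1, -⟩ := keyT b1 hb1
        obtain ⟨b2, hb2, hπb2⟩ := Finset.mem_image.1 hF2
        obtain ⟨e2, hFe2, -, hve2, -⟩ := keyT b2 hb2
        have hF1s : F1 = {e1} := by rw [← hπb1, hπ]; exact hFe1
        have hF2s : F2 = {e2} := by rw [← hπb2, hπ]; exact hFe2
        simp only [hF1s, hF2s, Finset.singleton_biUnion] at heq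
        have : e1 = e2 := by
          rw [← Finset.insert_erase hve1, ← Finset.insert_erase hve2, heq]
        rw [hF1s, hF2s, this]
      calc (T.image π).card
          ≤ (Finset.powersetCard 1 (Finset.univ.erase v)).card :=
            Finset.card_le_card_of_injOn _ hmap hinj
        _ = ((Finset.univ.erase v).card).choose 1 := Finset.card_powersetCard _ _
        _ = 2*n - 1 := by
            rw [Finset.card_erase_of_mem (Finset.mem_univ v), Finset.card_univ,
              Fintype.card_fin, Nat.choose_one_right]
    calc T.card ≤ k * (T.image π).card := hA
      _ ≤ k * (2*n - 1) := Nat.mul_le_mul_left k hB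
  calc Sv.card ≤ (n-1).choose (x-1) * (Sv.image g).card := h1
    _ ≤ (n-1).choose (x-1) * (k * (2*n - 1)) := Nat.mul_le_mul_left _ h2

theorem dependencyDegreeBound (n x s k : ℕ)
    (M : Fin s → Finset (Finset (Fin (2*n)))) (hM : ∀ i, IsPerfectMatching (M i))
    (hk : ∀ e : Finset (Fin (2*n)), e.card = 2 →
      (Finset.univ.filter (fun i => e ∈ M i)).card ≤ k)
    (i : Fin s) (X : Finset (Finset (Fin (2*n)))) (hXsub : X ⊆ M i) (hXcard : X.card = x) :
    Nat.card {p : Fin s × Finset (Finset (Fin (2*n))) //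
        p.2 ⊆ M p.1 ∧ p.2.card = x ∧
        ∃ v : Fin (2*n), (∃ e ∈ X, v ∈ e) ∧ (∃ e ∈ p.2, v ∈ e)}
      ≤ k * (2*x) * (2*n - 1) * ((n-1).choose (x-1)) := by
  classical
  rw [Nat.card_eq_fintype_card, Fintype.card_subtype]
  set VX := X.biUnion id with hVX
  set S := Finset.univ.filter (fun p : Fin s × Finset (Finset (Fin (2*n))) =>
      p.2 ⊆ M p.1 ∧ p.2.card = x ∧
      ∃ v : Fin (2*n), (∃ e ∈ X, v ∈ e) ∧ (∃ e ∈ p.2, v ∈ e)) with hS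
  have hsub : S ⊆ VX.biUnion (fun v => Finset.univ.filter
      (fun p : Fin s × Finset (Finset (Fin (2*n))) =>
        p.2 ⊆ M p.1 ∧ p.2.card = x ∧ ∃ e ∈ p.2, v ∈ e)) := by
    intro p hp
    rw [hS, Finset.mem_filter] at hp
    obtain ⟨-, h1, h2, v, ⟨e, he, hve⟩, h3⟩ := hp
    apply Finset.mem_biUnion.2
    refine ⟨v, Finset.mem_biUnion.2 ⟨e, he, hve⟩, ?_⟩
    exact Finset.mem_filter.2 ⟨Finset.mem_univ _, h1, h2, h3⟩
  have hVXcard : VX.card ≤ 2 * x := by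
    calc VX.card ≤ ∑ e ∈ X, e.card := Finset.card_biUnion_le
      _ = ∑ _e ∈ X, 2 := Finset.sum_congr rfl (fun e he => (hM i).1.1 e (hXsub he))
      _ = 2 * x := by rw [Finset.sum_const, smul_eq_mul, hXcard, mul_comm]
  calc S.card ≤ (VX.biUnion (fun v => Finset.univ.filter
        (fun p : Fin s × Finset (Finset (Fin (2*n))) =>
          p.2 ⊆ M p.1 ∧ p.2.card = x ∧ ∃ e ∈ p.2, v ∈ e))).card :=
        Finset.card_le_card hsub
    _ ≤ ∑ v ∈ VX, (Finset.univ.filter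
        (fun p : Fin s × Finset (Finset (Fin (2*n))) =>
          p.2 ⊆ M p.1 ∧ p.2.card = x ∧ ∃ e ∈ p.2, v ∈ e)).card :=
        Finset.card_biUnion_le
    _ ≤ ∑ _v ∈ VX, (n-1).choose (x-1) * (k * (2*n - 1)) :=
        Finset.sum_le_sum (fun v _ => Sv_bound n x s k M hM hk v)
    _ = VX.card * ((n-1).choose (x-1) * (k * (2*n - 1))) := by
        rw [Finset.sum_const, smul_eq_mul]
    _ ≤ (2*x) * ((n-1).choose (x-1) * (k * (2*n - 1))) :=
        Nat.mul_le_mul_right _ hVXcard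
    _ = k * (2*x) * (2*n - 1) * ((n-1).choose (x-1)) := by ring
end

section
/- Symmetric Lovász local lemma with conditional bounds: Let A_1,…,A_n be events in a probability space. Suppose for every i there is a set D_i ⊆ {A_1,…,A_n} with |D_i| ≤ d such that for every subset S ⊆ {A_1,…,A_n} \ D_i (with the conditioning event having positive probability), P(A_i | ∩_{A_j∈S} A_j^c) ≤ p. If e·p·(d+1) ≤ 1, then P(∩_{i=1}^n A_i^c) > 0. -/
open MeasureTheory ProbabilityTheory
open scoped ENNReal

/-! Write `avoid A S` for the event that no `A j` with `j ∈ S` occurs, and let `x = 1/(d+2)`.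
By strong induction on `S`, `μ (A i ∩ avoid A S) ≤ x μ (avoid A S)` for every `i`. Split `S`
into `T = S ∩ D i` and `R = S \ D i`: the hypothesis bounds `μ (A i ∩ avoid A R)` by
`p μ (avoid A R)`, and adding the at most `d` events of `T` one at a time shrinks
`μ (avoid A R)` by a factor of at least `1 - x` each time, by the induction hypothesis. So
`p ≤ x (1 - x)^d` closes the induction, and peeling all of `S` off `Ω` the same way gives
`μ (avoid A S) ≥ (1 - x)^|S| > 0`. Finally `e p (d+1) ≤ 1` implies `p ≤ x (1 - x)^d` since
`(1 + 1/(d+1))^(d+1) ≤ e`. -/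

lemma one_le_exp_one_mul_mul_one_sub_pow (d : ℕ) :
    1 ≤ Real.exp 1 * (d + 1) * ((d + 2 : ℝ)⁻¹ * (1 - (d + 2 : ℝ)⁻¹) ^ d) := by
  have key : Real.exp 1 * (d + 1) * ((d + 2 : ℝ)⁻¹ * (1 - (d + 2 : ℝ)⁻¹) ^ d)
      = Real.exp 1 / (1 + ((d + 1 : ℕ) : ℝ)⁻¹) ^ (d + 1) := by
    have h1 : 1 - (d + 2 : ℝ)⁻¹ = (d + 1) / (d + 2) := by field_simp; ring
    have h2 : 1 + ((d + 1 : ℕ) : ℝ)⁻¹ = (d + 2) / (d + 1) := by push_cast; field_simp; ring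
    rw [h1, h2, div_pow, div_pow, pow_succ, pow_succ]
    field_simp
  rw [key, one_le_div (by positivity)]
  exact Real.one_add_inv_pow_le_exp

/-- The textbook choice `y = 1/(d+1)` would violate `y < 1` when `d = 0`. -/
lemma exists_lt_one_le_mul_one_sub_pow {p : ℝ≥0∞} {d : ℕ}
    (h : ENNReal.ofReal (Real.exp 1) * p * (d + 1) ≤ 1) : ∃ y < 1, p ≤ y * (1 - y) ^ d := by
  set r : ℝ := (d + 2 : ℝ)⁻¹
  have hr0 : 0 ≤ r := by positivity
  have hr1 : r < 1 := inv_lt_one_of_one_lt₀ (by linarith [(d.cast_nonneg : (0:ℝ) ≤ d)])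
  refine ⟨ENNReal.ofReal r, ENNReal.ofReal_lt_one.2 hr1, ?_⟩
  have hq : ENNReal.ofReal r * (1 - ENNReal.ofReal r) ^ d = ENNReal.ofReal (r * (1 - r) ^ d) := by
    rw [ENNReal.ofReal_mul hr0, ENNReal.ofReal_pow (by linarith), ENNReal.ofReal_sub _ hr0,
      ENNReal.ofReal_one]
  have hd : ((d : ℝ≥0∞) + 1) = ENNReal.ofReal (d + 1) := by
    rw [ENNReal.ofReal_add (by positivity) zero_le_one]; simp
  rw [hq]
  calc p = p * 1 := (mul_one p).symm
    _ ≤ p * ENNReal.ofReal (Real.exp 1 * (d + 1) * (r * (1 - r) ^ d)) := by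
      gcongr
      exact ENNReal.one_le_ofReal.2 (one_le_exp_one_mul_mul_one_sub_pow d)
    _ = ENNReal.ofReal (Real.exp 1) * p * (d + 1) * ENNReal.ofReal (r * (1 - r) ^ d) := by
      rw [ENNReal.ofReal_mul (by positivity), ENNReal.ofReal_mul (by positivity), hd]
      ring
    _ ≤ ENNReal.ofReal (r * (1 - r) ^ d) := by
      grw [h, one_mul]

namespace LovaszLocalLemma

variable {Ω ι : Type*} {A : ι → Set Ω}

def avoid (A : ι → Set Ω) (S : Finset ι) : Set Ω := ⋂ j ∈ S, (A j)ᶜ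

@[simp] lemma avoid_empty : avoid A ∅ = Set.univ := by simp [avoid]

lemma avoid_insert [DecidableEq ι] (i : ι) (S : Finset ι) :
    avoid A (insert i S) = (A i)ᶜ ∩ avoid A S := by
  simp [avoid]

lemma avoid_anti {S T : Finset ι} (h : S ⊆ T) : avoid A T ⊆ avoid A S :=
  Set.biInter_subset_biInter_left (by exact_mod_cast h)

variable [MeasurableSpace Ω] {μ : Measure Ω}

lemma measurableSet_avoid (hA : ∀ i, MeasurableSet (A i)) (S : Finset ι) :
    MeasurableSet (avoid A S) :=
  .biInter S.countable_toSet fun j _ => (hA j).compl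

lemma one_sub_mul_measure_le_measure_compl_inter [IsFiniteMeasure μ] {s t : Set Ω} {x : ℝ≥0∞}
    (h : μ (s ∩ t) ≤ x * μ t) : (1 - x) * μ t ≤ μ (sᶜ ∩ t) := by
  rw [ENNReal.sub_mul fun _ _ => measure_ne_top μ t, one_mul, tsub_le_iff_right]
  calc μ t ≤ μ (t ∩ s) + μ (t \ s) := measure_le_inter_add_sdiff μ t s
    _ ≤ μ (sᶜ ∩ t) + x * μ t := by
      rw [add_comm, Set.sdiff_eq, Set.inter_comm t, Set.inter_comm t]
      gcongr

variable [IsFiniteMeasure μ] [DecidableEq ι] {x : ι → ℝ≥0∞}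

lemma prod_one_sub_mul_measure_avoid_le (R T : Finset ι)
    (h : ∀ U ⊂ T, ∀ j, μ (A j ∩ avoid A (R ∪ U)) ≤ x j * μ (avoid A (R ∪ U))) :
    (∏ j ∈ T, (1 - x j)) * μ (avoid A R) ≤ μ (avoid A (R ∪ T)) := by
  induction T using Finset.induction with
  | empty => simp
  | @insert j T hj ih =>
    have hT := ih fun U hU => h U (hU.trans_subset (Finset.subset_insert j T))
    calc (∏ k ∈ insert j T, (1 - x k)) * μ (avoid A R)
        = (1 - x j) * ((∏ k ∈ T, (1 - x k)) * μ (avoid A R)) := by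
          rw [Finset.prod_insert hj, mul_assoc]
      _ ≤ (1 - x j) * μ (avoid A (R ∪ T)) := by gcongr
      _ ≤ μ (avoid A (R ∪ insert j T)) := by
          rw [Finset.union_insert, avoid_insert]
          exact one_sub_mul_measure_le_measure_compl_inter (h T (Finset.ssubset_insert hj) j)

lemma measure_avoid_pos_of_ssubset [NeZero μ] (hx : ∀ i, x i < 1) (S : Finset ι)
    (h : ∀ U ⊂ S, ∀ j, μ (A j ∩ avoid A U) ≤ x j * μ (avoid A U)) : 0 < μ (avoid A S) := by
  have hprod : 0 < ∏ j ∈ S, (1 - x j) :=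
    pos_iff_ne_zero.2 <| Finset.prod_ne_zero_iff.2 fun j _ => (tsub_pos_of_lt (hx j)).ne'
  have := prod_one_sub_mul_measure_avoid_le ∅ S (by simpa using h)
  rw [Finset.empty_union, avoid_empty] at this
  exact (ENNReal.mul_pos hprod.ne' (NeZero.ne _)).trans_le this

theorem measure_inter_avoid_le [NeZero μ] (hx : ∀ i, x i < 1) {D : ι → Finset ι}
    (hcond : ∀ i S, Disjoint S (D i) → 0 < μ (avoid A S) →
      μ (A i ∩ avoid A S) ≤ x i * (∏ j ∈ D i, (1 - x j)) * μ (avoid A S))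
    (S : Finset ι) (i : ι) : μ (A i ∩ avoid A S) ≤ x i * μ (avoid A S) := by
  induction S using Finset.strongInduction generalizing i with
  | H S ih =>
    set R := S \ D i
    set T := S ∩ D i
    have hR : R ⊆ S := Finset.sdiff_subset
    have hRU : ∀ U ⊂ T, R ∪ U ⊂ S := by
      intro U hU
      obtain ⟨j, hjT, hjU⟩ := Finset.exists_of_ssubset hU
      rw [Finset.mem_inter] at hjT
      rw [Finset.ssubset_iff_of_subset
        (Finset.union_subset hR (hU.subset.trans Finset.inter_subset_left))]
      exact ⟨j, hjT.1, by simp [R, hjU, hjT.2]⟩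
    have hRpos : 0 < μ (avoid A R) :=
      (measure_avoid_pos_of_ssubset hx S ih).trans_le (measure_mono (avoid_anti hR))
    calc μ (A i ∩ avoid A S) ≤ μ (A i ∩ avoid A R) := by gcongr; exact avoid_anti hR
      _ ≤ x i * (∏ j ∈ D i, (1 - x j)) * μ (avoid A R) := hcond i R Finset.sdiff_disjoint hRpos
      _ ≤ x i * ((∏ j ∈ T, (1 - x j)) * μ (avoid A R)) := by
        rw [mul_assoc]
        gcongr x i * (?_ * _)
        exact Finset.prod_le_prod_of_subset_of_le_one' Finset.inter_subset_right
          fun j _ _ => tsub_le_self (a := (1 : ℝ≥0∞)) (b := x j)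
      _ ≤ x i * μ (avoid A S) := by
        grw [prod_one_sub_mul_measure_avoid_le R T fun U hU => ih _ (hRU U hU),
          Finset.sdiff_union_inter]

theorem measure_avoid_pos [NeZero μ] (hx : ∀ i, x i < 1) {D : ι → Finset ι}
    (hcond : ∀ i S, Disjoint S (D i) → 0 < μ (avoid A S) →
      μ (A i ∩ avoid A S) ≤ x i * (∏ j ∈ D i, (1 - x j)) * μ (avoid A S))
    (S : Finset ι) : 0 < μ (avoid A S) :=
  measure_avoid_pos_of_ssubset hx S fun U _ => measure_inter_avoid_le hx hcond U

theorem measure_avoid_pos_of_cond_le [NeZero μ] (hA : ∀ i, MeasurableSet (A i))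
    {D : ι → Finset ι} {d : ℕ} (hD : ∀ i, (D i).card ≤ d) {p y : ℝ≥0∞} (hy : y < 1)
    (hp : p ≤ y * (1 - y) ^ d)
    (hcond : ∀ i S, Disjoint S (D i) → 0 < μ (avoid A S) → μ[A i | avoid A S] ≤ p)
    (S : Finset ι) : 0 < μ (avoid A S) := by
  refine measure_avoid_pos (x := fun _ => y) (D := D) (fun _ => hy) (fun i S hS hpos => ?_) S
  rw [Set.inter_comm, ← cond_mul_eq_inter (measurableSet_avoid hA S)]
  grw [hcond i S hS hpos, hp, Finset.prod_const,
    pow_le_pow_of_le_one zero_le tsub_le_self (hD i)]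

end LovaszLocalLemma

theorem symmetricLLLConditional {Ω : Type*} [MeasurableSpace Ω]
    (μ : Measure Ω) [IsProbabilityMeasure μ]
    (n : ℕ) (A : Fin n → Set Ω) (hA : ∀ i, MeasurableSet (A i))
    (D : Fin n → Finset (Fin n)) (d : ℕ) (hD : ∀ i, (D i).card ≤ d)
    (p : ENNReal)
    (hcond : ∀ i : Fin n, ∀ S : Finset (Fin n), Disjoint S (D i) →
      0 < μ (⋂ j ∈ S, (A j)ᶜ) →
      (μ[|⋂ j ∈ S, (A j)ᶜ]) (A i) ≤ p)
    (h : ENNReal.ofReal (Real.exp 1) * p * (d + 1) ≤ 1) :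
    0 < μ (⋂ i, (A i)ᶜ) := by
  obtain ⟨y, hy, hp⟩ := exists_lt_one_le_mul_one_sub_pow h
  simpa [LovaszLocalLemma.avoid] using
    LovaszLocalLemma.measure_avoid_pos_of_cond_le hA hD hy hp hcond Finset.univ
end

section
/- Let M be a collection of perfect matchings of the complete t-uniform hypergraph on tn vertices in which each t-element edge appears in at most k members. For a fixed member M_i and a fixed x-matching X ⊆ M_i, the number of pairs (M_{i'}, X') with M_{i'} ∈ M, X' an x-matching contained in M_{i'}, and X' meeting the vertex set of X, is at most k · tx · C(tn-1, t-1) · C(n-1, x-1). -/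
open Finset

/-- A perfect matching of the complete `t`-uniform hypergraph on the vertex set `V`. -/
def IsHPerfectMatching {V : Type} [DecidableEq V] (t : ℕ) (M : Finset (Finset V)) : Prop :=
  (∀ e ∈ M, e.card = t) ∧ (M : Set (Finset V)).Pairwise Disjoint ∧
    ∀ v : V, ∃ e ∈ M, v ∈ e

/-!
Every counted pair `(M j, Y)` contains an edge `e` through some vertex `v` of `X`. There are at
most `t x` such vertices, at most `C(tn-1, t-1)` edges of size `t` through each of them, at most
`k` matchings `M j` containing a given edge `e`, and at most `C(n-1, x-1)` subsets of size `x` of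
the `n`-edge matching `M j` that contain `e`.
-/

theorem Finset.card_filter_mem_powersetCard_le {α : Type*} [DecidableEq α] {s : Finset α}
    {a : α} (ha : a ∈ s) (m : ℕ) : #{Y ∈ s.powersetCard m | a ∈ Y} ≤ (#s - 1).choose (m - 1) := by
  rcases Nat.eq_zero_or_pos m with rfl | hm
  · exact (card_le_card (filter_subset _ _)).trans (by simp)
  have h := card_filter_powersetCard_subset {a} s m (singleton_subset_iff.2 ha) hm
  simp only [singleton_subset_iff, card_singleton] at h
  exact h.le

theorem IsHPerfectMatching.mul_card_eq {V : Type} [Fintype V] [DecidableEq V] {t : ℕ}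
    {M : Finset (Finset V)} (hM : IsHPerfectMatching t M) : t * #M = Fintype.card V := by
  obtain ⟨hcard, hdisj, hcover⟩ := hM
  have hunion : M.biUnion id = univ :=
    eq_univ_of_forall fun v => mem_biUnion.2 (hcover v)
  rw [← card_univ, ← hunion, card_biUnion (t := id) fun a ha b hb hab => hdisj ha hb hab,
    sum_const_nat (f := fun u => #(id u)) hcard, mul_comm]

section Submatchings

variable {ι : Type*} {V : Type} [Fintype ι] [DecidableEq ι] [Fintype V] [DecidableEq V]

theorem card_submatchings_containing_le {M : ι → Finset (Finset V)} {e : Finset V} {n k : ℕ}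
    (hn : ∀ j, e ∈ M j → #(M j) = n) (hk : #{j | e ∈ M j} ≤ k) (x : ℕ) :
    #{p : ι × Finset (Finset V) | p.2 ⊆ M p.1 ∧ #p.2 = x ∧ e ∈ p.2}
      ≤ k * (n - 1).choose (x - 1) := by
  have hsub : ({p : ι × Finset (Finset V) | p.2 ⊆ M p.1 ∧ #p.2 = x ∧ e ∈ p.2} : Finset _) ⊆
      ({j | e ∈ M j} : Finset ι).biUnion fun j => {Y ∈ (M j).powersetCard x | e ∈ Y}.map
        (Function.Embedding.sectR j _) := by
    rintro ⟨j, Y⟩ hp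
    simp only [mem_filter, mem_univ, true_and] at hp
    obtain ⟨hY, hcard, he⟩ := hp
    simp [hY he, hY, hcard, he]
  refine (card_le_card hsub).trans <| (card_biUnion_le_card_mul _ _ _ fun j hj => ?_).trans
    (Nat.mul_le_mul_right _ hk)
  rw [card_map, ← hn j (mem_filter.1 hj).2]
  exact card_filter_mem_powersetCard_le (mem_filter.1 hj).2 x

theorem card_submatchings_meeting_le {M : ι → Finset (Finset V)} {t n k : ℕ}
    (hM : ∀ j, IsHPerfectMatching t (M j)) (hV : Fintype.card V = t * n)
    (hk : ∀ e : Finset V, #e = t → #{j | e ∈ M j} ≤ k) (U : Finset V) (x : ℕ) :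
    #{p : ι × Finset (Finset V) | p.2 ⊆ M p.1 ∧ #p.2 = x ∧ ∃ v ∈ U, ∃ e ∈ p.2, v ∈ e}
      ≤ #U * ((t * n - 1).choose (t - 1) * (k * (n - 1).choose (x - 1))) := by
  have hcover : ({p : ι × Finset (Finset V) | p.2 ⊆ M p.1 ∧ #p.2 = x ∧
        ∃ v ∈ U, ∃ e ∈ p.2, v ∈ e} : Finset _) ⊆
      U.biUnion fun v => {e ∈ (univ : Finset V).powersetCard t | v ∈ e}.biUnion fun e =>
        {p : ι × Finset (Finset V) | p.2 ⊆ M p.1 ∧ #p.2 = x ∧ e ∈ p.2} := by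
    intro p hp
    simp only [mem_filter, mem_univ, true_and] at hp
    obtain ⟨hY, hcard, v, hv, e, he, hve⟩ := hp
    simp only [mem_biUnion, mem_filter, mem_powersetCard_univ, mem_univ, true_and]
    exact ⟨v, hv, e, ⟨(hM p.1).1 e (hY he), hve⟩, hY, hcard, he⟩
  refine (card_le_card hcover).trans <| card_biUnion_le_card_mul _ _ _ fun v _ =>
    (card_biUnion_le_card_mul _ _ _ fun e he => ?_).trans (Nat.mul_le_mul_right _ ?_)
  · obtain ⟨he, hve⟩ := mem_filter.1 he
    have het : #e = t := (mem_powersetCard.1 he).2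
    have ht : 0 < t := het ▸ card_pos.2 ⟨v, hve⟩
    refine card_submatchings_containing_le (fun j _ => ?_) (hk e het) x
    exact Nat.eq_of_mul_eq_mul_left ht ((hM j).mul_card_eq.trans hV)
  · simpa only [card_univ, hV] using card_filter_mem_powersetCard_le (mem_univ v) t

end Submatchings

theorem hypergraphDependencyDegreeBound (t n x s k : ℕ)
    (M : Fin s → Finset (Finset (Fin (t*n)))) (hM : ∀ i, IsHPerfectMatching t (M i))
    (hk : ∀ e : Finset (Fin (t*n)), e.card = t →
      (Finset.univ.filter (fun i => e ∈ M i)).card ≤ k)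
    (i : Fin s) (X : Finset (Finset (Fin (t*n)))) (hXsub : X ⊆ M i) (hXcard : X.card = x) :
    Nat.card {p : Fin s × Finset (Finset (Fin (t*n))) //
        p.2 ⊆ M p.1 ∧ p.2.card = x ∧
        ∃ v : Fin (t*n), (∃ e ∈ X, v ∈ e) ∧ (∃ e ∈ p.2, v ∈ e)}
      ≤ k * (t*x) * ((t*n - 1).choose (t-1)) * ((n-1).choose (x-1)) := by
  have hU : #(X.biUnion id) ≤ t * x := by
    refine (card_biUnion_le_card_mul _ _ _ fun e he => ((hM i).1 e (hXsub he)).le).trans_eq ?_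
    rw [hXcard, mul_comm]
  have hpairs := card_submatchings_meeting_le hM (Fintype.card_fin _) hk (X.biUnion id) x
  simp only [mem_biUnion, id] at hpairs
  rw [Nat.card_eq_fintype_card, Fintype.card_subtype]
  calc _ ≤ _ := hpairs
    _ ≤ t * x * ((t * n - 1).choose (t - 1) * (k * (n - 1).choose (x - 1))) :=
      Nat.mul_le_mul_right _ hU
    _ = _ := by ring
end
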